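/- arXiv:1104.1515 — 2 statements merged into one kernel-verified Lean document; each statement's English description precedes it below -/
import Mathlib

section
/- Let G be a group generated by a finite set S, and let H ≤ G be a subgroup generated by a finite subset T ⊆ S. Suppose g₀ ∈ S satisfies g₀^n ∉ H for all positive integers n. Then for every m, the ball G_m of radius m in G (with respect to S) contains the disjoint union ⋃_{j=0}^{m} g₀^j H_{m-j}, where H_r is the ball of radius r in H with respect to T; consequently #G_m ≥ ∑_{j=0}^{m} #H_{m-j}. -/
open Pointwise

/-- The ball of radius `m` in the word metric determined by the finite generating set `S`
(symmetrized and with the identity adjoined): the set of products of at most `m`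
generators or inverses of generators. -/
def wordBall {G : Type*} [Group G] [DecidableEq G] (S : Finset G) (m : ℕ) : Finset G :=
  (insert (1 : G) (S ∪ S⁻¹)) ^ m

lemma wordBall_mem_subgroup {G : Type*} [Group G] [DecidableEq G] (T : Finset G)
    (H : Subgroup G) (hT : (T : Set G) ⊆ H) (r : ℕ) :
    ∀ x ∈ wordBall T r, x ∈ H := by
  induction r with
  | zero => intro x hx; simp [wordBall] at hx; rw [hx]; exact H.one_mem
  | succ n ih =>
    intro x hx
    rw [wordBall, pow_succ] at hx
    obtain ⟨a, ha, b, hb, rfl⟩ := Finset.mem_mul.mp hx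
    have hb' : b ∈ H := by
      rcases Finset.mem_insert.mp hb with h1 | h2
      · rw [h1]; exact H.one_mem
      · rcases Finset.mem_union.mp h2 with h3 | h4
        · exact hT h3
        · have : b⁻¹ ∈ T := by simpa [Finset.mem_inv'] using h4
          simpa using H.inv_mem (hT this)
    exact H.mul_mem (ih a ha) hb'

/-- If `G` is generated by the finite set `S`, `H` is the subgroup generated by
`T ⊆ S`, and `g₀ ∈ S` has no positive power in `H`, then the translates `g₀^j • H_{m-j}`
(for `0 ≤ j ≤ m`) are pairwise disjoint subsets of the ball `G_m`; consequently
`#G_m ≥ ∑_{j=0}^m #H_{m-j}`. -/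
theorem stmt4 {G : Type*} [Group G] [DecidableEq G] (S T : Finset G) (hTS : T ⊆ S)
    (hS : Subgroup.closure (S : Set G) = ⊤)
    (H : Subgroup G) (hH : H = Subgroup.closure (T : Set G))
    (g₀ : G) (hg₀ : g₀ ∈ S) (h0 : ∀ n : ℕ, 0 < n → g₀ ^ n ∉ H) (m : ℕ) :
    (∀ j ≤ m, (g₀ ^ j • wordBall T (m - j) : Finset G) ⊆ wordBall S m) ∧
    (∀ j ≤ m, ∀ j' ≤ m, j ≠ j' →
      Disjoint (g₀ ^ j • wordBall T (m - j) : Finset G) (g₀ ^ j' • wordBall T (m - j'))) ∧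
    ∑ j ∈ Finset.range (m + 1), (wordBall T (m - j)).card ≤ (wordBall S m).card := by
  have hTH : (T : Set G) ⊆ H := by
    rw [hH]; exact Subgroup.subset_closure
  -- memberships in H
  have hmemH : ∀ r : ℕ, ∀ x ∈ wordBall T r, x ∈ H := fun r => wordBall_mem_subgroup T H hTH r
  -- containment
  have hsub : ∀ j ≤ m, (g₀ ^ j • wordBall T (m - j) : Finset G) ⊆ wordBall S m := by
    intro j hj x hx
    obtain ⟨y, hy, rfl⟩ := Finset.mem_smul_finset.mp hx
    have hy' : y ∈ wordBall S (m - j) := by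
      refine Finset.pow_subset_pow_left ?_ hy
      exact Finset.insert_subset_insert _ (Finset.union_subset_union hTS (Finset.inv_subset_inv hTS))
    have hg : g₀ ^ j ∈ (insert (1 : G) (S ∪ S⁻¹)) ^ j :=
      Finset.pow_mem_pow (Finset.mem_insert_of_mem (Finset.mem_union_left _ hg₀))
    have : g₀ ^ j * y ∈ (insert (1 : G) (S ∪ S⁻¹)) ^ j * (insert (1 : G) (S ∪ S⁻¹)) ^ (m - j) :=
      Finset.mul_mem_mul hg hy'
    rwa [← pow_add, Nat.add_sub_cancel' hj] at this
  -- disjointness (general form)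
  have hdisj : ∀ j ≤ m, ∀ j' ≤ m, j ≠ j' →
      Disjoint (g₀ ^ j • wordBall T (m - j) : Finset G) (g₀ ^ j' • wordBall T (m - j')) := by
    have key : ∀ j j' : ℕ, j' < j →
        Disjoint (g₀ ^ j • wordBall T (m - j) : Finset G) (g₀ ^ j' • wordBall T (m - j')) := by
      intro j j' hlt
      rw [Finset.disjoint_left]
      rintro x hx hx'
      obtain ⟨y, hy, rfl⟩ := Finset.mem_smul_finset.mp hx
      obtain ⟨y', hy', heq⟩ := Finset.mem_smul_finset.mp hx'
      have hyH := hmemH _ y hy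
      have hy'H := hmemH _ y' hy'
      have hpow : g₀ ^ (j - j') = y' * y⁻¹ := by
        have h1 : g₀ ^ j' * y' = g₀ ^ j * y := by simpa [smul_eq_mul] using heq
        have h2 : g₀ ^ j = g₀ ^ j' * g₀ ^ (j - j') := by
          rw [← pow_add, Nat.add_sub_cancel' hlt.le]
        rw [h2, mul_assoc] at h1
        have h3 := mul_left_cancel h1
        rw [h3]; group
      exact h0 (j - j') (Nat.sub_pos_of_lt hlt)
        (hpow ▸ H.mul_mem hy'H (H.inv_mem hyH))
    intro j hj j' hj' hne
    rcases hne.lt_or_gt with h | h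
    · exact (key j' j h).symm
    · exact key j j' h
  refine ⟨hsub, hdisj, ?_⟩
  -- cardinality
  have hpd : (↑(Finset.range (m + 1)) : Set ℕ).PairwiseDisjoint
      (fun j => (g₀ ^ j • wordBall T (m - j) : Finset G)) := by
    intro j hj j' hj' hne
    exact hdisj j (Nat.lt_succ_iff.mp (Finset.mem_range.mp hj)) j'
      (Nat.lt_succ_iff.mp (Finset.mem_range.mp hj')) hne
  calc ∑ j ∈ Finset.range (m + 1), (wordBall T (m - j)).card
      = ∑ j ∈ Finset.range (m + 1), (g₀ ^ j • wordBall T (m - j) : Finset G).card := by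
        simp [Finset.card_smul_finset]
    _ = ((Finset.range (m + 1)).biUnion
          (fun j => (g₀ ^ j • wordBall T (m - j) : Finset G))).card :=
        (Finset.card_biUnion hpd).symm
    _ ≤ (wordBall S m).card := by
        apply Finset.card_le_card
        intro x hx
        obtain ⟨j, hj, hxj⟩ := Finset.mem_biUnion.mp hx
        exact hsub j (Nat.lt_succ_iff.mp (Finset.mem_range.mp hj)) hxj
end

section
/- Let G be a group with finite generating set S and H ≤ G a subgroup with finite generating set T ⊆ S. Suppose there exist positive reals α, β and a natural number k such that for all m ≥ 1: #H_m ≥ α m^k (balls in H w.r.t. T) and #G_m ≤ β m^k (balls in G w.r.t. S). Then for every g ∈ G there exists a positive integer n with g^n ∈ H. -/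
open Pointwise

section Aux

variable {G : Type*} [Group G] [DecidableEq G]

lemma wordBall_inv (S : Finset G) (m : ℕ) : (wordBall S m)⁻¹ = wordBall S m := by
  unfold wordBall
  rw [← inv_pow]
  congr 1
  ext x
  simp only [Finset.mem_inv', Finset.mem_insert, Finset.mem_union, inv_eq_one]
  constructor
  · rintro (h | h | h)
    · exact Or.inl h
    · exact Or.inr (Or.inr (by simpa using h))
    · exact Or.inr (Or.inl (by simpa using h))
  · rintro (h | h | h)
    · exact Or.inl h
    · exact Or.inr (Or.inr (by simpa using h))
    · exact Or.inr (Or.inl (by simpa using h))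

lemma wordBall_mul (S : Finset G) (m n : ℕ) :
    wordBall S m * wordBall S n = wordBall S (m + n) := (pow_add _ _ _).symm

lemma one_mem_wordBall (S : Finset G) (m : ℕ) : (1 : G) ∈ wordBall S m := by
  induction m with
  | zero => simp [wordBall]
  | succ n ih =>
      have : (1 : G) * 1 ∈ wordBall S n * wordBall S 1 :=
        Finset.mul_mem_mul ih (by simp [wordBall])
      simpa [wordBall_mul] using this

lemma wordBall_mono (S : Finset G) {m n : ℕ} (h : m ≤ n) : wordBall S m ⊆ wordBall S n :=
  Finset.pow_subset_pow_right (Finset.mem_insert_self _ _) h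

lemma wordBall_subset (S T : Finset G) (hTS : T ⊆ S) (m : ℕ) :
    wordBall T m ⊆ wordBall S m := by
  exact Finset.pow_subset_pow
    (Finset.insert_subset_insert _ (Finset.union_subset_union hTS (Finset.inv_subset_inv hTS)))
    (Finset.mem_insert_self _ _) le_rfl

lemma exists_mem_wordBall (S : Finset G) (hS : Subgroup.closure (S : Set G) = ⊤) (g : G) :
    ∃ ℓ : ℕ, g ∈ wordBall S ℓ := by
  have hg : g ∈ Subgroup.closure (S : Set G) := by rw [hS]; trivial
  induction hg using Subgroup.closure_induction with
  | mem x hx =>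
      refine ⟨1, ?_⟩
      simp only [wordBall, pow_one, Finset.mem_insert, Finset.mem_union]
      exact Or.inr (Or.inl hx)
  | one => exact ⟨0, by simp [wordBall]⟩
  | mul x y _ _ hx hy =>
      obtain ⟨a, ha⟩ := hx
      obtain ⟨b, hb⟩ := hy
      exact ⟨a + b, by rw [← wordBall_mul]; exact Finset.mul_mem_mul ha hb⟩
  | inv x _ hx =>
      obtain ⟨a, ha⟩ := hx
      refine ⟨a, ?_⟩
      rw [← wordBall_inv]
      exact Finset.inv_mem_inv ha

lemma wordBall_subset_closure (T : Finset G) (m : ℕ) :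
    ∀ x ∈ wordBall T m, x ∈ Subgroup.closure (T : Set G) := by
  induction m with
  | zero =>
      intro x hx
      simp only [wordBall, pow_zero, Finset.mem_one] at hx
      exact hx ▸ one_mem _
  | succ n ih =>
      intro x hx
      rw [show n + 1 = n + 1 from rfl, ← wordBall_mul] at hx
      rw [Finset.mem_mul] at hx
      obtain ⟨y, hy, z, hz, rfl⟩ := hx
      refine mul_mem (ih y hy) ?_
      simp only [wordBall, pow_one, Finset.mem_insert, Finset.mem_union] at hz
      rcases hz with rfl | hz | hz
      · exact one_mem _
      · exact Subgroup.subset_closure hz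
      · rw [Finset.mem_inv'] at hz
        have := Subgroup.subset_closure hz
        exact (Subgroup.inv_mem_iff _).mp this

lemma pow_mem_wordBall {S : Finset G} {g : G} {ℓ : ℕ} (hg : g ∈ wordBall S ℓ) (i : ℕ) :
    g ^ i ∈ wordBall S (i * ℓ) := by
  induction i with
  | zero => simpa using one_mem_wordBall S 0
  | succ n ih =>
      have : g ^ n * g ∈ wordBall S (n * ℓ) * wordBall S ℓ := Finset.mul_mem_mul ih hg
      rw [wordBall_mul] at this
      rw [pow_succ, show (n + 1) * ℓ = n * ℓ + ℓ by ring]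
      exact this

end Aux

/-- If `H ≤ G` with generating set `T ⊆ S` satisfies `#H_m ≥ α m^k` while
`#G_m ≤ β m^k` for all `m ≥ 1` (with `α, β > 0`), then every `g ∈ G` has a positive power
lying in `H`. -/
theorem stmt5 {G : Type*} [Group G] [DecidableEq G] (S T : Finset G) (hTS : T ⊆ S)
    (hS : Subgroup.closure (S : Set G) = ⊤)
    (H : Subgroup G) (hH : H = Subgroup.closure (T : Set G))
    (α β : ℝ) (hα : 0 < α) (hβ : 0 < β) (k : ℕ)
    (hHgrowth : ∀ m : ℕ, 1 ≤ m → α * (m : ℝ) ^ k ≤ (wordBall T m).card)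
    (hGgrowth : ∀ m : ℕ, 1 ≤ m → ((wordBall S m).card : ℝ) ≤ β * (m : ℝ) ^ k) :
    ∀ g : G, ∃ n : ℕ, 0 < n ∧ g ^ n ∈ H := by
  intro g
  by_contra hcon
  push_neg at hcon
  obtain ⟨ℓ, hg⟩ := exists_mem_wordBall S hS g
  set C : ℝ := β * ((ℓ : ℝ) + 1) ^ k / α with hC
  obtain ⟨m₀, hm₀⟩ := exists_nat_gt C
  set m : ℕ := max 1 m₀ with hm
  have hm1 : 1 ≤ m := le_max_left 1 m₀
  have hmC : C < (m : ℝ) := lt_of_lt_of_le hm₀ (by exact_mod_cast le_max_right 1 m₀)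
  set B : Finset G := wordBall T m with hB
  -- the translates g^i • B, i = 0, ..., m are pairwise disjoint
  have hdisj : ∀ i ∈ Finset.range (m + 1), ∀ j ∈ Finset.range (m + 1), i ≠ j →
      Disjoint (g ^ i • B) (g ^ j • B) := by
    have key : ∀ i j : ℕ, i < j → Disjoint (g ^ i • B) (g ^ j • B) := by
      intro i j hij
      rw [Finset.disjoint_left]
      rintro x hxi hxj
      rw [Finset.mem_smul_finset] at hxi hxj
      obtain ⟨b₁, hb₁, rfl⟩ := hxi
      obtain ⟨b₂, hb₂, hbeq⟩ := hxj
      obtain ⟨d, rfl⟩ : ∃ d, j = i + d := ⟨j - i, (Nat.add_sub_cancel' hij.le).symm⟩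
      have hd : 0 < d := by omega
      simp only [smul_eq_mul, pow_add] at hbeq
      have hgd : g ^ d = b₁ * b₂⁻¹ := by
        have : b₁ = g ^ d * b₂ := by
          have := hbeq
          rw [mul_assoc] at this
          exact (mul_left_cancel this).symm
        rw [this, mul_assoc, mul_inv_cancel, mul_one]
      have hb₁H : b₁ ∈ H := by rw [hH]; exact wordBall_subset_closure T m b₁ hb₁
      have hb₂H : b₂ ∈ H := by rw [hH]; exact wordBall_subset_closure T m b₂ hb₂
      have : g ^ d ∈ H := hgd ▸ mul_mem hb₁H (inv_mem hb₂H)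
      exact hcon d hd this
    intro i _ j _ hij
    rcases lt_or_gt_of_ne hij with h | h
    · exact key i j h
    · exact (key j i h).symm
  -- the union of the translates lies in a ball of radius m * (ℓ + 1)
  have hsub : (Finset.range (m + 1)).biUnion (fun i => g ^ i • B) ⊆
      wordBall S (m * (ℓ + 1)) := by
    intro x hx
    rw [Finset.mem_biUnion] at hx
    obtain ⟨i, hi, hx⟩ := hx
    rw [Finset.mem_smul_finset] at hx
    obtain ⟨b, hb, rfl⟩ := hx
    rw [Finset.mem_range] at hi
    have h1 : g ^ i ∈ wordBall S (m * ℓ) :=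
      wordBall_mono S (Nat.mul_le_mul_right ℓ (by omega)) (pow_mem_wordBall hg i)
    have h2 : b ∈ wordBall S m := wordBall_subset S T hTS m hb
    have : g ^ i * b ∈ wordBall S (m * ℓ) * wordBall S m := Finset.mul_mem_mul h1 h2
    rw [wordBall_mul] at this
    rw [smul_eq_mul, show m * (ℓ + 1) = m * ℓ + m by ring]
    exact this
  -- counting
  have hcard : (m + 1) * B.card ≤ (wordBall S (m * (ℓ + 1))).card := by
    calc (m + 1) * B.card
        = ∑ i ∈ Finset.range (m + 1), (g ^ i • B).card := by
          simp [Finset.card_smul_finset, mul_comm]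
      _ = ((Finset.range (m + 1)).biUnion (fun i => g ^ i • B)).card :=
          (Finset.card_biUnion hdisj).symm
      _ ≤ (wordBall S (m * (ℓ + 1))).card := Finset.card_le_card hsub
  -- pass to the reals
  have hmR : (0 : ℝ) < (m : ℝ) ^ k := by positivity
  have hml : 1 ≤ m * (ℓ + 1) := Nat.one_le_iff_ne_zero.mpr (by positivity)
  have hup : ((wordBall S (m * (ℓ + 1))).card : ℝ) ≤ β * ((ℓ : ℝ) + 1) ^ k * (m : ℝ) ^ k := by
    have := hGgrowth (m * (ℓ + 1)) hml
    calc ((wordBall S (m * (ℓ + 1))).card : ℝ) ≤ β * ((m * (ℓ + 1) : ℕ) : ℝ) ^ k := this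
      _ = β * ((ℓ : ℝ) + 1) ^ k * (m : ℝ) ^ k := by
          rw [Nat.cast_mul, Nat.cast_add, Nat.cast_one, mul_pow]; ring
  have hlow : ((m : ℝ) + 1) * (α * (m : ℝ) ^ k) ≤ ((wordBall S (m * (ℓ + 1))).card : ℝ) := by
    calc ((m : ℝ) + 1) * (α * (m : ℝ) ^ k)
        ≤ ((m : ℝ) + 1) * (B.card : ℝ) := by
          apply mul_le_mul_of_nonneg_left (hHgrowth m hm1) (by positivity)
      _ = (((m + 1) * B.card : ℕ) : ℝ) := by push_cast; ring
      _ ≤ ((wordBall S (m * (ℓ + 1))).card : ℝ) := by exact_mod_cast hcard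
  have hfinal : (m : ℝ) + 1 ≤ C := by
    have h1 : ((m : ℝ) + 1) * (α * (m : ℝ) ^ k) ≤ β * ((ℓ : ℝ) + 1) ^ k * (m : ℝ) ^ k :=
      le_trans hlow hup
    rw [hC, le_div_iff₀ hα]
    nlinarith [hmR]
  linarith
end
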